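/- Let y₁, y₂, y₃ ∈ ℝ³ be the vertices of an equilateral triangle centered at the origin in the z = 0 plane, yᵢ = l(cos(2π(i−1)/3), sin(2π(i−1)/3), 0) with l > 0, with equal masses m > 0 and equal spring constants k > 0, and take the body-frame coordinates x̃ᵢ = yᵢ. For θ ∈ ℝ let R_θ = D · R_z(θ), where R_z(θ) is the rotation by θ about the z-axis and D = diag(1, −1, −1) is the rotation by π about the x-axis. Then R_θ ∈ SO(3) and, for every θ, the total spring force and total spring torque vanish: Σᵢ k(yᵢ − R_θ x̃ᵢ − 0) = 0 and Σᵢ k x̃ᵢ × (R_θᵀ yᵢ) = 0. Consequently every state (0, R_θ, 0, 0) is an equilibrium of the registration dynamics, and since θ ↦ R_θ is injective on [0, 2π), the system has infinitely many equilibrium points. -/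

import Mathlib

open Matrix Filter
open scoped RealInnerProductSpace

noncomputable section

/-- Vectors in ℝ³ with the Euclidean norm. -/
abbrev V3 : Type := EuclideanSpace ℝ (Fin 3)

/-- The cross product on ℝ³. -/
def cross3 (a b : V3) : V3 :=
  WithLp.toLp 2 ![a 1 * b 2 - a 2 * b 1, a 2 * b 0 - a 0 * b 2, a 0 * b 1 - a 1 * b 0]

/-- The skew-symmetric matrix `â` of a vector, satisfying `â b = a × b`. -/
def hat (a : V3) : Matrix (Fin 3) (Fin 3) ℝ :=
  !![0, -(a 2), a 1; a 2, 0, -(a 0); -(a 1), a 0, 0]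

/-- Action of a 3×3 matrix on a vector in ℝ³. -/
def act (R : Matrix (Fin 3) (Fin 3) ℝ) (v : V3) : V3 := WithLp.toLp 2 (R.mulVec v)

/-- Membership in SO(3). -/
def isSO3 (R : Matrix (Fin 3) (Fin 3) ℝ) : Prop := Rᵀ * R = 1 ∧ R.det = 1

/-!
The vertices of the triangle sum to zero, so the net spring force `∑ (yᵢ - R yᵢ)` vanishes for
every `R`. The net torque `∑ yᵢ × M yᵢ` is the axial vector of the antisymmetric part of `M S`,
where `S = ∑ yᵢ yᵢᵀ = (3 l² / 2) diag(1, 1, 0)` is the second moment of the triangle; for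
`M = (D R_z(θ))ᵀ` the matrix `M diag(1, 1, 0)` is symmetric, so the torque vanishes as well.
The first column `(cos θ, -sin θ, 0)` of `D R_z(θ)` determines `θ` modulo `2π`.
-/

open Real

lemma act_eq_toLpLin (R : Matrix (Fin 3) (Fin 3) ℝ) : act R = Matrix.toLpLin 2 2 R := rfl

lemma sum_sub_act_eq_zero {ι : Type*} [Fintype ι] {x : ι → V3} (hx : ∑ i, x i = 0)
    (R : Matrix (Fin 3) (Fin 3) ℝ) : ∑ i, (x i - act R (x i)) = 0 := by
  rw [Finset.sum_sub_distrib, act_eq_toLpLin, ← map_sum, hx, map_zero, sub_zero]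

def secondMoment {ι : Type*} [Fintype ι] (x : ι → V3) : Matrix (Fin 3) (Fin 3) ℝ :=
  ∑ i, vecMulVec (x i) (x i)

lemma mul_secondMoment_apply {ι : Type*} [Fintype ι] (x : ι → V3)
    (M : Matrix (Fin 3) (Fin 3) ℝ) (a b : Fin 3) :
    (M * secondMoment x) a b = ∑ i, act M (x i) a * x i b := by
  simp only [secondMoment, mul_apply, Matrix.sum_apply, vecMulVec_apply, Finset.mul_sum, act,
    mulVec, dotProduct, Finset.sum_mul]
  rw [Finset.sum_comm]
  simp only [mul_assoc]

lemma sum_cross_act_eq {ι : Type*} [Fintype ι] (x : ι → V3) (M : Matrix (Fin 3) (Fin 3) ℝ) :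
    ∑ i, cross3 (x i) (act M (x i)) =
      let T := M * secondMoment x
      WithLp.toLp 2 ![T 2 1 - T 1 2, T 0 2 - T 2 0, T 1 0 - T 0 1] := by
  ext j
  fin_cases j <;>
  · simp only [mul_secondMoment_apply, cross3, WithLp.ofLp_sum, Finset.sum_apply,
      ← Finset.sum_sub_distrib]
    exact Finset.sum_congr rfl fun i _ => by simp; ring

lemma sum_cross_act_eq_zero_of_isSymm {ι : Type*} [Fintype ι] (x : ι → V3)
    {M : Matrix (Fin 3) (Fin 3) ℝ} (h : (M * secondMoment x).IsSymm) :
    ∑ i, cross3 (x i) (act M (x i)) = 0 := by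
  rw [sum_cross_act_eq]
  ext j
  fin_cases j <;> simp [h.apply]

lemma cos_two_pi_div_three : cos (2 * π / 3) = -(1 / 2) := by
  rw [show 2 * π / 3 = π - π / 3 by ring, cos_pi_sub, cos_pi_div_three]

lemma sin_two_pi_div_three : sin (2 * π / 3) = √3 / 2 := by
  rw [show 2 * π / 3 = π - π / 3 by ring, sin_pi_sub, sin_pi_div_three]

lemma cos_four_pi_div_three : cos (4 * π / 3) = -(1 / 2) := by
  rw [show 4 * π / 3 = π / 3 + π by ring, cos_add_pi, cos_pi_div_three]

lemma sin_four_pi_div_three : sin (4 * π / 3) = -(√3 / 2) := by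
  rw [show 4 * π / 3 = π / 3 + π by ring, sin_add_pi, sin_pi_div_three]

def triangle (l : ℝ) (i : Fin 3) : V3 :=
  WithLp.toLp 2 (l • ![cos (2 * π * ((i : ℕ) : ℝ) / 3), sin (2 * π * ((i : ℕ) : ℝ) / 3), 0])

lemma triangle_zero (l : ℝ) : triangle l 0 = WithLp.toLp 2 (l • ![1, 0, 0]) := by
  simp [triangle]

lemma triangle_one (l : ℝ) : triangle l 1 = WithLp.toLp 2 (l • ![-(1 / 2), √3 / 2, 0]) := by
  have h : 2 * π * (((1 : Fin 3) : ℕ) : ℝ) / 3 = 2 * π / 3 := by norm_num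
  rw [triangle, h, cos_two_pi_div_three, sin_two_pi_div_three]

lemma triangle_two (l : ℝ) : triangle l 2 = WithLp.toLp 2 (l • ![-(1 / 2), -(√3 / 2), 0]) := by
  have h : 2 * π * (((2 : Fin 3) : ℕ) : ℝ) / 3 = 4 * π / 3 := by norm_num; ring
  rw [triangle, h, cos_four_pi_div_three, sin_four_pi_div_three]

lemma sum_triangle (l : ℝ) : ∑ i, triangle l i = 0 := by
  rw [Fin.sum_univ_three, triangle_zero, triangle_one, triangle_two]
  ext j
  fin_cases j <;> simp
  ring

lemma secondMoment_triangle (l : ℝ) :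
    secondMoment (triangle l) = (3 * l ^ 2 / 2) • diagonal ![1, 1, 0] := by
  have h3 : √3 ^ 2 = 3 := sq_sqrt (by norm_num)
  ext a b
  fin_cases a <;> fin_cases b <;>
    simp [secondMoment, Fin.sum_univ_three, triangle_zero, triangle_one, triangle_two]
  · ring
  · linear_combination (l ^ 2 / 2) * h3

def rotZ (θ : ℝ) : Matrix (Fin 3) (Fin 3) ℝ :=
  !![cos θ, -sin θ, 0; sin θ, cos θ, 0; 0, 0, 1]

def flipX : Matrix (Fin 3) (Fin 3) ℝ := !![1, 0, 0; 0, -1, 0; 0, 0, -1]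

lemma isSO3_mul {A B : Matrix (Fin 3) (Fin 3) ℝ} (hA : isSO3 A) (hB : isSO3 B) :
    isSO3 (A * B) := by
  refine ⟨?_, by rw [det_mul, hA.2, hB.2, one_mul]⟩
  rw [transpose_mul, Matrix.mul_assoc, ← Matrix.mul_assoc Aᵀ, hA.1, Matrix.one_mul, hB.1]

lemma isSO3_rotZ (θ : ℝ) : isSO3 (rotZ θ) := by
  have h := sin_sq_add_cos_sq θ
  refine ⟨?_, ?_⟩
  · ext i j
    fin_cases i <;> fin_cases j <;> simp [rotZ, mul_apply, Fin.sum_univ_three] <;> linarith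
  · simp [rotZ, det_fin_three]
    linear_combination h

lemma isSO3_flipX : isSO3 flipX := by
  refine ⟨?_, ?_⟩
  · ext i j
    fin_cases i <;> fin_cases j <;> simp [flipX, mul_apply, Fin.sum_univ_three]
  · simp [flipX, det_fin_three]

lemma injOn_coe_angle : Set.InjOn ((↑) : ℝ → Real.Angle) (Set.Ico 0 (2 * π)) := by
  have : Fact (0 < 2 * π) := ⟨two_pi_pos⟩
  intro a ha b hb h
  exact (AddCircle.coe_eq_coe_iff_of_mem_Ico (p := 2 * π) (a := 0) (by simpa using ha)
    (by simpa using hb)).1 h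

lemma injOn_flipX_mul_rotZ : Set.InjOn (fun θ => flipX * rotZ θ) (Set.Ico 0 (2 * π)) := by
  intro a ha b hb h
  have hcos : cos a = cos b := by
    simpa [flipX, rotZ, mul_apply, Fin.sum_univ_three] using congrFun (congrFun h 0) 0
  have hsin : sin a = sin b := by
    simpa [flipX, rotZ, mul_apply, Fin.sum_univ_three] using congrFun (congrFun h 1) 0
  exact injOn_coe_angle ha hb (Real.Angle.cos_sin_inj hcos hsin)

lemma isSymm_transpose_flipX_mul_rotZ_mul_diagonal (θ : ℝ) :
    ((flipX * rotZ θ)ᵀ * diagonal ![1, 1, 0]).IsSymm := by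
  ext i j
  fin_cases i <;> fin_cases j <;> simp [flipX, rotZ, mul_apply, Fin.sum_univ_three]

lemma sum_smul_sub_act_triangle (k l : ℝ) (R : Matrix (Fin 3) (Fin 3) ℝ) :
    ∑ i, k • (triangle l i - act R (triangle l i)) = 0 := by
  rw [← Finset.smul_sum, sum_sub_act_eq_zero (sum_triangle l), smul_zero]

lemma sum_smul_cross_triangle_flipX_mul_rotZ (k l θ : ℝ) :
    ∑ i, k • cross3 (triangle l i) (act (flipX * rotZ θ)ᵀ (triangle l i)) = 0 := by
  rw [← Finset.smul_sum, sum_cross_act_eq_zero_of_isSymm, smul_zero]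
  rw [secondMoment_triangle, Matrix.mul_smul]
  exact (isSymm_transpose_flipX_mul_rotZ_mul_diagonal θ).smul _

theorem equilateral_triangle_infinite_equilibria_general (l : ℝ)
    (kspring : ℝ)
    (y : Fin 3 → V3)
    (hy : ∀ i : Fin 3, y i =
      l • ![Real.cos (2 * Real.pi * ((i : ℕ) : ℝ) / 3),
            Real.sin (2 * Real.pi * ((i : ℕ) : ℝ) / 3), 0])
    (xt : Fin 3 → V3) (hxt : ∀ i, xt i = y i)
    (Rz : ℝ → Matrix (Fin 3) (Fin 3) ℝ)
    (hRz : ∀ θ, Rz θ = !![Real.cos θ, -Real.sin θ, 0;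
                           Real.sin θ, Real.cos θ, 0;
                           0, 0, 1])
    (D : Matrix (Fin 3) (Fin 3) ℝ)
    (hD : D = !![1, 0, 0; 0, -1, 0; 0, 0, -1]) :
    (∀ θ : ℝ, isSO3 (D * Rz θ)
      ∧ ∑ i, kspring • (y i - act (D * Rz θ) (xt i) - (0 : V3)) = 0
      ∧ ∑ i, kspring • cross3 (xt i) (act (D * Rz θ)ᵀ (y i)) = 0)
    ∧ Set.InjOn (fun θ => D * Rz θ) (Set.Ico 0 (2 * Real.pi))
    ∧ Set.Infinite {s : V3 × Matrix (Fin 3) (Fin 3) ℝ × V3 × V3 |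
        isSO3 s.2.1 ∧ s.2.2.1 = 0 ∧ s.2.2.2 = 0
        ∧ ∑ i, kspring • (y i - act s.2.1 (xt i) - s.1) = 0
        ∧ ∑ i, kspring • cross3 (xt i) (act s.2.1ᵀ (y i - s.1)) = 0} := by
  obtain rfl : y = triangle l := funext fun i => WithLp.ofLp_injective 2 (hy i)
  obtain rfl : xt = triangle l := funext hxt
  obtain rfl : Rz = rotZ := funext hRz
  obtain rfl : D = flipX := hD
  have isSO3_R θ := isSO3_mul isSO3_flipX (isSO3_rotZ θ)
  have force := sum_smul_sub_act_triangle kspring l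
  have torque := sum_smul_cross_triangle_flipX_mul_rotZ kspring l
  refine ⟨fun θ => ⟨isSO3_R θ, by simpa using force _, torque θ⟩, injOn_flipX_mul_rotZ, ?_⟩
  refine Set.infinite_of_injOn_mapsTo (s := Set.Ico 0 (2 * π))
    (f := fun θ => ((0 : V3), flipX * rotZ θ, (0 : V3), (0 : V3)))
    (fun a ha b hb h => injOn_flipX_mul_rotZ ha hb (congrArg (·.2.1) h))
    (fun θ _ => ⟨isSO3_R θ, rfl, rfl, by simpa using force _, by simpa using torque θ⟩)
    (Set.Ico_infinite two_pi_pos)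

/-- for an equilateral triangle centered at the origin, every rotation
`R_θ = D ⬝ R_z(θ)` (a rotation by θ about the z-axis followed by a flip by π about
the x-axis) gives a torque- and force-balanced configuration; hence the registration
dynamics has infinitely many equilibrium points. -/
theorem equilateral_triangle_infinite_equilibria (l : ℝ) (hl : 0 < l)
    (mass kspring : ℝ) (hmass : 0 < mass) (hk : 0 < kspring)
    (y : Fin 3 → V3)
    (hy : ∀ i : Fin 3, y i =
      l • ![Real.cos (2 * Real.pi * ((i : ℕ) : ℝ) / 3),
            Real.sin (2 * Real.pi * ((i : ℕ) : ℝ) / 3), 0])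
    (xt : Fin 3 → V3) (hxt : ∀ i, xt i = y i)
    (Rz : ℝ → Matrix (Fin 3) (Fin 3) ℝ)
    (hRz : ∀ θ, Rz θ = !![Real.cos θ, -Real.sin θ, 0;
                           Real.sin θ, Real.cos θ, 0;
                           0, 0, 1])
    (D : Matrix (Fin 3) (Fin 3) ℝ)
    (hD : D = !![1, 0, 0; 0, -1, 0; 0, 0, -1]) :
    (∀ θ : ℝ, isSO3 (D * Rz θ)
      ∧ ∑ i, kspring • (y i - act (D * Rz θ) (xt i) - (0 : V3)) = 0
      ∧ ∑ i, kspring • cross3 (xt i) (act (D * Rz θ)ᵀ (y i)) = 0)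
    ∧ Set.InjOn (fun θ => D * Rz θ) (Set.Ico 0 (2 * Real.pi))
    ∧ Set.Infinite {s : V3 × Matrix (Fin 3) (Fin 3) ℝ × V3 × V3 |
        isSO3 s.2.1 ∧ s.2.2.1 = 0 ∧ s.2.2.2 = 0
        ∧ ∑ i, kspring • (y i - act s.2.1 (xt i) - s.1) = 0
        ∧ ∑ i, kspring • cross3 (xt i) (act s.2.1ᵀ (y i - s.1)) = 0} :=
  equilateral_triangle_infinite_equilibria_general l kspring y hy xt hxt Rz hRz D hD
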